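/- Let S be a ⟨∨,0⟩-semilattice, let κ and λ be infinite cardinals, let (a_ξ)_{ξ<κ} be an increasing family in S with a_0 = 0 and let (b_η)_{η<λ} be a decreasing family in S with a_ξ ≤ b_η for all ξ < κ and η < λ. Let ν denote the restriction of σ to V_{κ,λ}, let e_{κ,λ} : U_{κ,λ} ↪ V_{κ,λ} be the inclusion map, let s_{κ,λ} : U_{κ,λ} → U_{κ,λ} be the map ⟨x0,x1,x2⟩ ↦ ⟨x0,x2,x1⟩, and let e'_{κ,λ} = e_{κ,λ} ∘ s_{κ,λ}. Suppose there exist a meet-semilattice L, meet-homomorphisms f, f' : V_{κ,λ} → L, and an order-preserving map ρ : L → S such that f ∘ e_{κ,λ} = f' ∘ e'_{κ,λ} and ρ ∘ f = ρ ∘ f' = ν. Then there exists c ∈ S such that a_ξ ≤ c ≤ b_η for all ξ < κ and η < λ. -/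

import Mathlib

open Set Cardinal

/-- Membership in the Boolean subalgebra of the powerset of `P` generated by the
lower subsets of `P`: the smallest family of subsets of `P` containing all lower
sets and closed under complementation and (binary) union (hence also under binary
intersection, and containing `∅` and `P`). -/
inductive IntMem (P : Type*) [Preorder P] : Set P → Prop
  | lower (s : Set P) : IsLowerSet s → IntMem P s
  | compl (s : Set P) : IntMem P s → IntMem P sᶜ
  | union (s t : Set P) : IntMem P s → IntMem P t → IntMem P (s ∪ t)

/-- `Int P`: the Boolean subalgebra of the powerset of `P` generated by the lower subsets
of `P`, viewed as a set of subsets of `P`. -/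
def IntP (P : Type*) [Preorder P] : Set (Set P) := {s | IntMem P s}

open Classical in
/-- `χ_o` : sends a subset of `{β | β < o}` to `false` if it is bounded (contained in some
`α < o`) and to `true` otherwise. -/
noncomputable def chiO (o : Ordinal) (x : Set ↥(Set.Iio o)) : Bool :=
  if ∃ α < o, ∀ β ∈ x, (β : Ordinal) < α then false else true

/-- The ambient Boolean algebra `(Set κ) × (Set λ) × (Set λ)` in which
`A_{κ,λ} = Int κ × Int λ × Int λ` lives. -/
abbrev Amb (κ lam : Cardinal) : Type _ :=
  Set ↥(Set.Iio κ.ord) × Set ↥(Set.Iio lam.ord) × Set ↥(Set.Iio lam.ord)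

/-- `A_{κ,λ} = Int κ × Int λ × Int λ`. -/
def ASet (κ lam : Cardinal) : Set (Amb κ lam) :=
  {p | p.1 ∈ IntP ↥(Set.Iio κ.ord) ∧ p.2.1 ∈ IntP ↥(Set.Iio lam.ord) ∧
       p.2.2 ∈ IntP ↥(Set.Iio lam.ord)}

/-- `U_{κ,λ} = {⟨x0,x1,x2⟩ ∈ A_{κ,λ} : χ_κ(x0) = χ_λ(x1) = χ_λ(x2)}`. -/
def USet (κ lam : Cardinal) : Set (Amb κ lam) :=
  {p ∈ ASet κ lam | chiO κ.ord p.1 = chiO lam.ord p.2.1 ∧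
    chiO lam.ord p.2.1 = chiO lam.ord p.2.2}

/-- `V_{κ,λ} = {⟨x0,x1,x2⟩ ∈ A_{κ,λ} : χ_κ(x0) = χ_λ(x1)}`. -/
def VSet (κ lam : Cardinal) : Set (Amb κ lam) :=
  {p ∈ ASet κ lam | chiO κ.ord p.1 = chiO lam.ord p.2.1}

/-- `P*_{κ,λ} = {⟨x0,x1,x2⟩ ∈ A_{κ,λ} : χ_κ(x0) = 0 or x1 ∪ x2 ≠ ∅}`. -/
def PstarSet (κ lam : Cardinal) : Set (Amb κ lam) :=
  {p ∈ ASet κ lam | chiO κ.ord p.1 = false ∨ p.2.1 ∪ p.2.2 ≠ ∅}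

/-- `P_{κ,λ} = {⟨x0,x1,x2⟩ ∈ A_{κ,λ} : χ_κ(x0) = χ_λ(x1) ∨ χ_λ(x2)}`. -/
def PkSet (κ lam : Cardinal) : Set (Amb κ lam) :=
  {p ∈ ASet κ lam | chiO κ.ord p.1 = chiO lam.ord p.2.1 ⊔ chiO lam.ord p.2.2}

open Classical in
/-- The map `σ = σ_{⃗a,⃗b} : P*_{κ,λ} → S` : `σ(⟨x0,x1,x2⟩) = a_{sup x0}` if
`x1 ∪ x2 = ∅` (in which case `x0` is bounded, so `sup x0 < κ`), and
`σ(⟨x0,x1,x2⟩) = b_{min (x1 ∪ x2)}` otherwise.  (Outside of `P*_{κ,λ}` the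
value of this function is irrelevant; junk value `⊥` is used when the
corresponding index is out of range.) -/
noncomputable def sigmaM (κ lam : Cardinal) {S : Type*} [SemilatticeSup S] [OrderBot S]
    (a : ↥(Set.Iio κ.ord) → S) (b : ↥(Set.Iio lam.ord) → S) (p : Amb κ lam) : S :=
  if p.2.1 ∪ p.2.2 = ∅ then
    if h : sSup (Subtype.val '' p.1) < κ.ord then a ⟨sSup (Subtype.val '' p.1), h⟩ else ⊥
  else
    if h : sInf (Subtype.val '' (p.2.1 ∪ p.2.2)) < lam.ord then
      b ⟨sInf (Subtype.val '' (p.2.1 ∪ p.2.2)), h⟩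
    else ⊥

/-- The measure `μ = μ_{⃗a,⃗b}` on `P_{κ,λ}` : `μ(x, y) = σ(x \ y)`. -/
noncomputable def muM (κ lam : Cardinal) {S : Type*} [SemilatticeSup S] [OrderBot S]
    (a : ↥(Set.Iio κ.ord) → S) (b : ↥(Set.Iio lam.ord) → S) (p q : Amb κ lam) : S :=
  sigmaM κ lam a b (p \ q)

/-- The symmetry `s_{κ,λ} : ⟨x0,x1,x2⟩ ↦ ⟨x0,x2,x1⟩`. -/
def swapM (κ lam : Cardinal) (p : Amb κ lam) : Amb κ lam := (p.1, p.2.2, p.2.1)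

/-! Put `v = (κ, λ, ∅) ∈ V` and `c = ρ (f v ⊓ f' v)`.

For `ξ < κ`, the element `u = ([0, ξ], ∅, ∅)` of `U` is fixed by the swap and lies below `v`;
hence `f u = f' u ≤ f v ⊓ f' v`, and `a ξ = ν u ≤ c`.

For `η < λ`, the element `t = (κ, [η, λ), λ)` of `U` has swap `(κ, λ, [η, λ)) ≥ v`; hence
`f' v ≤ f' (swap t) = f t`, so `f v ⊓ f' v ≤ f (v ⊓ t) = f (κ, [η, λ), ∅)`, and
`c ≤ ν (κ, [η, λ), ∅) = b η`. -/

section Amalgamation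

variable {α L : Type*} [SemilatticeInf α] [SemilatticeInf L] {V : Set α} {s : α → α}
  {f f' : α → L}

theorem monotoneOn_of_map_inf (hf : ∀ x ∈ V, ∀ y ∈ V, f (x ⊓ y) = f x ⊓ f y) :
    MonotoneOn f V := fun x hx y hy hxy =>
  calc f x = f (x ⊓ y) := by rw [inf_eq_left.2 hxy]
    _ = f x ⊓ f y := hf x hx y hy
    _ ≤ f y := inf_le_right

theorem map_le_inf_of_map_swap_fixed (hf : ∀ x ∈ V, ∀ y ∈ V, f (x ⊓ y) = f x ⊓ f y)
    (hf' : ∀ x ∈ V, ∀ y ∈ V, f' (x ⊓ y) = f' x ⊓ f' y) {u v : α} (hcomm : f u = f' (s u))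
    (hu : u ∈ V) (hv : v ∈ V) (hsu : s u = u) (huv : u ≤ v) : f u ≤ f v ⊓ f' v :=
  le_inf (monotoneOn_of_map_inf hf hu hv huv)
    ((hcomm.trans (congrArg f' hsu)).trans_le (monotoneOn_of_map_inf hf' hu hv huv))

theorem inf_le_map_inf_of_map_swap (hf : ∀ x ∈ V, ∀ y ∈ V, f (x ⊓ y) = f x ⊓ f y)
    (hf' : ∀ x ∈ V, ∀ y ∈ V, f' (x ⊓ y) = f' x ⊓ f' y) {t v : α} (hcomm : f t = f' (s t))
    (ht : t ∈ V) (hst : s t ∈ V) (hv : v ∈ V) (hvt : v ≤ s t) : f v ⊓ f' v ≤ f (v ⊓ t) :=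
  calc f v ⊓ f' v ≤ f v ⊓ f t :=
        inf_le_inf_left _ ((monotoneOn_of_map_inf hf' hv hst hvt).trans_eq hcomm.symm)
    _ = f (v ⊓ t) := (hf v hv t ht).symm

end Amalgamation

section Interval

variable {P : Type*}

theorem intMem_Iic [Preorder P] (x : P) : IntMem P (Iic x) :=
  .lower _ (isLowerSet_Iic x)

theorem intMem_Ici [LinearOrder P] (x : P) : IntMem P (Ici x) := by
  simpa using IntMem.compl _ (.lower _ (isLowerSet_Iio x))

theorem intMem_univ [Preorder P] : IntMem P Set.univ :=
  .lower _ isLowerSet_univ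

theorem intMem_empty [Preorder P] : IntMem P ∅ :=
  .lower _ isLowerSet_empty

end Interval

section Chi

variable {o : Ordinal}

theorem chiO_eq_false_iff {x : Set (Iio o)} :
    chiO o x = false ↔ ∃ α < o, ∀ β ∈ x, (β : Ordinal) < α := by
  unfold chiO; split_ifs with h <;> simpa using h

theorem chiO_empty (ho : 0 < o) : chiO o ∅ = false :=
  chiO_eq_false_iff.2 ⟨0, ho, by simp⟩

theorem chiO_Iic (ho : Order.IsSuccLimit o) (ξ : Iio o) : chiO o (Iic ξ) = false :=
  chiO_eq_false_iff.2 ⟨Order.succ ξ, ho.succ_lt ξ.2, fun _ hβ => Order.lt_succ_of_le hβ⟩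

theorem chiO_Ici (η : Iio o) : chiO o (Ici η) = true := by
  by_contra h
  obtain ⟨α, hα, hbound⟩ := chiO_eq_false_iff.1 (Bool.eq_false_iff.2 h)
  exact (hbound ⟨max α η, max_lt hα η.2⟩ (le_max_right α (η : Ordinal))).not_ge (le_max_left _ _)

theorem chiO_univ : chiO o Set.univ = true := by
  by_contra h
  obtain ⟨α, hα, hbound⟩ := chiO_eq_false_iff.1 (Bool.eq_false_iff.2 h)
  exact (hbound ⟨α, hα⟩ trivial).false

end Chi

section Elements

variable {κ lam : Cardinal}

theorem USet_subset_VSet : USet κ lam ⊆ VSet κ lam := fun _ hu => ⟨hu.1, hu.2.1⟩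

theorem Iic_empty_empty_mem_USet (hκ : Order.IsSuccLimit κ.ord) (hlam : 0 < lam.ord)
    (ξ : Iio κ.ord) : ((Iic ξ, ∅, ∅) : Amb κ lam) ∈ USet κ lam :=
  ⟨⟨intMem_Iic ξ, intMem_empty, intMem_empty⟩, by simp [chiO_Iic hκ, chiO_empty hlam]⟩

theorem univ_univ_empty_mem_VSet : ((Set.univ, Set.univ, ∅) : Amb κ lam) ∈ VSet κ lam :=
  ⟨⟨intMem_univ, intMem_univ, intMem_empty⟩, by simp [chiO_univ]⟩

theorem univ_Ici_univ_mem_USet (η : Iio lam.ord) :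
    ((Set.univ, Ici η, Set.univ) : Amb κ lam) ∈ USet κ lam :=
  ⟨⟨intMem_univ, intMem_Ici η, intMem_univ⟩, by simp [chiO_univ, chiO_Ici]⟩

theorem univ_univ_Ici_mem_VSet (η : Iio lam.ord) :
    ((Set.univ, Set.univ, Ici η) : Amb κ lam) ∈ VSet κ lam :=
  ⟨⟨intMem_univ, intMem_univ, intMem_Ici η⟩, by simp [chiO_univ]⟩

theorem univ_Ici_empty_mem_VSet (η : Iio lam.ord) :
    ((Set.univ, Ici η, ∅) : Amb κ lam) ∈ VSet κ lam :=
  ⟨⟨intMem_univ, intMem_Ici η, intMem_empty⟩, by simp [chiO_univ, chiO_Ici]⟩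

variable {S : Type*} [SemilatticeSup S] [OrderBot S] (a : Iio κ.ord → S) (b : Iio lam.ord → S)

theorem sigmaM_Iic_empty_empty (ξ : Iio κ.ord) :
    sigmaM κ lam a b (Iic ξ, ∅, ∅) = a ξ := by
  simp [sigmaM, mem_Iio.1 ξ.2]

theorem sigmaM_univ_Ici_empty (η : Iio lam.ord) :
    sigmaM κ lam a b (Set.univ, Ici η, ∅) = b η := by
  simp [sigmaM, nonempty_Ici.ne_empty, csInf_Ico (mem_Iio.1 η.2), mem_Iio.1 η.2]

end Elements

theorem interpolation_of_two_dim_amalgamation.{u} (κ lam : Cardinal)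
    (hκ : ℵ₀ ≤ κ) (hlam : ℵ₀ ≤ lam)
    {S : Type*} [SemilatticeSup S] [OrderBot S]
    (a : ↥(Set.Iio κ.ord) → S) (b : ↥(Set.Iio lam.ord) → S)
    (ha : Monotone a) (hb : Antitone b)
    (ha0 : ∀ ξ : ↥(Set.Iio κ.ord), (ξ : Ordinal) = 0 → a ξ = ⊥)
    (hab : ∀ ξ η, a ξ ≤ b η)
    (L : Type u) [SemilatticeInf L] (f f' : Amb κ lam → L)
    (hf : ∀ x ∈ VSet κ lam, ∀ y ∈ VSet κ lam, f (x ⊓ y) = f x ⊓ f y)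
    (hf' : ∀ x ∈ VSet κ lam, ∀ y ∈ VSet κ lam, f' (x ⊓ y) = f' x ⊓ f' y)
    (ρ : L → S) (hρ : Monotone ρ)
    (hcomm : ∀ u ∈ USet κ lam, f u = f' (swapM κ lam u))
    (hρf : ∀ v ∈ VSet κ lam, ρ (f v) = sigmaM κ lam a b v)
    (hρf' : ∀ v ∈ VSet κ lam, ρ (f' v) = sigmaM κ lam a b v) :
    ∃ c : S, (∀ ξ, a ξ ≤ c) ∧ ∀ η, c ≤ b η := by
  set v : Amb κ lam := (Set.univ, Set.univ, ∅)
  have hv : v ∈ VSet κ lam := univ_univ_empty_mem_VSet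
  refine ⟨ρ (f v ⊓ f' v), fun ξ => ?_, fun η => ?_⟩
  · have hu := Iic_empty_empty_mem_USet (lam := lam) (isSuccLimit_ord hκ)
      (isSuccLimit_ord hlam).pos ξ
    have hle : f (Iic ξ, ∅, ∅) ≤ f v ⊓ f' v :=
      map_le_inf_of_map_swap_fixed hf hf' (hcomm _ hu) (USet_subset_VSet hu) hv rfl
        ⟨subset_univ _, subset_univ _, le_rfl⟩
    rw [← sigmaM_Iic_empty_empty a b ξ, ← hρf _ (USet_subset_VSet hu)]
    exact hρ hle
  · have ht := univ_Ici_univ_mem_USet (κ := κ) η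
    have hvt : v ⊓ (Set.univ, Ici η, Set.univ) = (Set.univ, Ici η, ∅) := by simp [v]
    have hle : f v ⊓ f' v ≤ f (Set.univ, Ici η, ∅) :=
      hvt ▸ inf_le_map_inf_of_map_swap hf hf' (hcomm _ ht) (USet_subset_VSet ht)
        (univ_univ_Ici_mem_VSet η) hv ⟨le_rfl, le_rfl, empty_subset _⟩
    rw [← sigmaM_univ_Ici_empty a b η, ← hρf _ (univ_Ici_empty_mem_VSet η)]
    exact hρ hle
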